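/- arXiv:2401.00311 — 6 statements merged into one kernel-verified Lean document; each statement's English description precedes it below -/
import Mathlib

section
/- Let d be a point on line A (i.e., A ⬝ d = 0) and suppose a₁ lies on the line cd (i.e., a₁ ⬝ (c ×₃ d) = 0, with c, d independent). Then d lies on Grassmann's cubic: G(d) = 0, where G(x) = (xaAa₁) ⬝ ((xbBkCb₁) ×₃ (xc)). -/
/-!
Since `d` lies on `A`, the meet `(d ⨯₃ a) ⨯₃ A` is a multiple of `d`, so the first and third
factors of the bracket are the lines `d ⨯₃ a₁` and `d ⨯₃ c` through `d`. By the quadruple product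
identity such a bracket is a multiple of `a₁ ⬝ᵥ d ⨯₃ c`, which vanishes as `a₁` lies on `cd`.
-/

open Matrix

variable {R : Type*} [CommRing R]

lemma cross_cross_eq_smul_of_dotProduct_eq_zero {d A : Fin 3 → R} (a : Fin 3 → R)
    (hdA : A ⬝ᵥ d = 0) : d ⨯₃ a ⨯₃ A = -(a ⬝ᵥ A) • d := by
  rw [cross_cross_eq_smul_sub_smul, dotProduct_comm, hdA, zero_smul, zero_sub, neg_smul]

lemma cross_dotProduct_cross_cross_left (d e c x : Fin 3 → R) :
    d ⨯₃ e ⬝ᵥ x ⨯₃ (d ⨯₃ c) = (d ⬝ᵥ x) * (e ⬝ᵥ d ⨯₃ c) := by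
  rw [cross_dot_cross, dot_self_cross, zero_mul, sub_zero]

theorem grassmann_cubic_through_d_general (a a₁ b b₁ c d k A B C : Fin 3 → ℝ)
    (hdA : A ⬝ᵥ d = 0)
    (ha₁ : a₁ ⬝ᵥ (c ⨯₃ d) = 0) :
    (((d ⨯₃ a) ⨯₃ A) ⨯₃ a₁) ⬝ᵥ
      ((((((d ⨯₃ b) ⨯₃ B) ⨯₃ k) ⨯₃ C) ⨯₃ b₁) ⨯₃ (d ⨯₃ c)) = 0 := by
  have ha₁' : a₁ ⬝ᵥ d ⨯₃ c = 0 := by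
    rw [← cross_anticomm, dotProduct_neg, ha₁, neg_zero]
  rw [cross_cross_eq_smul_of_dotProduct_eq_zero a hdA, LinearMap.map_smul₂, smul_dotProduct,
    cross_dotProduct_cross_cross_left, ha₁', mul_zero, smul_zero]

/-- If d lies on the line A and a₁ lies on the line cd (with c, d independent),
then d lies on Grassmann's cubic. -/
theorem grassmann_cubic_through_d (a a₁ b b₁ c d k A B C : Fin 3 → ℝ)
    (hdA : A ⬝ᵥ d = 0) (hcd : LinearIndependent ℝ ![c, d])
    (ha₁ : a₁ ⬝ᵥ (c ⨯₃ d) = 0) :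
    (((d ⨯₃ a) ⨯₃ A) ⨯₃ a₁) ⬝ᵥ
      ((((((d ⨯₃ b) ⨯₃ B) ⨯₃ k) ⨯₃ C) ⨯₃ b₁) ⨯₃ (d ⨯₃ c)) = 0 :=
  grassmann_cubic_through_d_general a a₁ b b₁ c d k A B C hdA ha₁
end

section
/- Suppose the lines A, B, C are concurrent, meeting at a common point e (i.e., A ⬝ e = B ⬝ e = C ⬝ e = 0), with e not equal to a, b, or c projectively. Then e lies on Grassmann's cubic: G(e) = 0, where G(x) is the bracket of the lines xaAa₁, xbBkCb₁, and xc. -/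
/-!
Reading vectors of `ℝ³` both as points and as lines, `x ⨯₃ y` is the line through two points
and also the meet of two lines. If `p` lies on the line `w`, then the meet of `w` with any line
through `p` is again `p`. Hence when `e` lies on `A`, `B` and `C`, every point built in
Grassmann's construction from `e` is a multiple of `e`, so the three lines of the bracket all
pass through `e`, and the bracket vanishes.
-/

open Matrix Submodule

variable {R : Type*} [CommRing R]

theorem cross_cross_mem_span_singleton {p x w : Fin 3 → R} (hx : x ∈ R ∙ p)
    (hw : w ⬝ᵥ p = 0) (v : Fin 3 → R) : x ⨯₃ v ⨯₃ w ∈ R ∙ p := by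
  obtain ⟨t, rfl⟩ := mem_span_singleton.mp hx
  rw [LinearMap.map_smul₂, LinearMap.map_smul₂, cross_cross_eq_smul_sub_smul,
    dotProduct_comm, hw, zero_smul, zero_sub, ← neg_smul]
  exact smul_mem _ _ (smul_mem _ _ (mem_span_singleton_self p))

theorem cross_dotProduct_eq_zero_of_mem_span_singleton {p x y : Fin 3 → R} (hx : x ∈ R ∙ p)
    (hy : y ∈ R ∙ p) (v : Fin 3 → R) : x ⨯₃ v ⬝ᵥ y = 0 := by
  obtain ⟨s, rfl⟩ := mem_span_singleton.mp hx
  obtain ⟨t, rfl⟩ := mem_span_singleton.mp hy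
  rw [LinearMap.map_smul₂, smul_dotProduct, dotProduct_smul, dotProduct_comm, dot_self_cross,
    smul_zero, smul_zero]

theorem grassmann_cubic_through_e_general (a a₁ b b₁ c e k A B C : Fin 3 → ℝ)
    (heA : A ⬝ᵥ e = 0) (heB : B ⬝ᵥ e = 0) (heC : C ⬝ᵥ e = 0) :
    (((e ⨯₃ a) ⨯₃ A) ⨯₃ a₁) ⬝ᵥ
      ((((((e ⨯₃ b) ⨯₃ B) ⨯₃ k) ⨯₃ C) ⨯₃ b₁) ⨯₃ (e ⨯₃ c)) = 0 := by
  have he : e ∈ ℝ ∙ e := mem_span_singleton_self e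
  have hec_e : e ⨯₃ c ⬝ᵥ e = 0 := by rw [dotProduct_comm, dot_self_cross]
  have hEA := cross_cross_mem_span_singleton he heA a
  have hEB := cross_cross_mem_span_singleton he heB b
  have hEC := cross_cross_mem_span_singleton hEB heC k
  have hEc := cross_cross_mem_span_singleton hEC hec_e b₁
  exact cross_dotProduct_eq_zero_of_mem_span_singleton hEA hEc a₁

/-- If the lines A, B, C are concurrent at a point e, distinct (projectively)
from a, b, c, then e lies on Grassmann's cubic. -/
theorem grassmann_cubic_through_e (a a₁ b b₁ c e k A B C : Fin 3 → ℝ)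
    (heA : A ⬝ᵥ e = 0) (heB : B ⬝ᵥ e = 0) (heC : C ⬝ᵥ e = 0)
    (hea : ∀ t : ℝ, e ≠ t • a) (heb : ∀ t : ℝ, e ≠ t • b)
    (hec : ∀ t : ℝ, e ≠ t • c) :
    (((e ⨯₃ a) ⨯₃ A) ⨯₃ a₁) ⬝ᵥ
      ((((((e ⨯₃ b) ⨯₃ B) ⨯₃ k) ⨯₃ C) ⨯₃ b₁) ⨯₃ (e ⨯₃ c)) = 0 :=
  grassmann_cubic_through_e_general a a₁ b b₁ c e k A B C heA heB heC
end

section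
/- Let f be a point with b₁ on the line k ×₃ f (i.e., b₁ ⬝ (k ×₃ f) = 0), f on line B (i.e., B ⬝ f = 0), and a₁ on the line a ×₃ f. Then f lies on Grassmann's cubic: G(f) = 0, where G(x) is the bracket of the lines xaAa₁, xbBkCb₁, and xc. -/
/-!
All three lines of the bracket pass through `f`. For `((f ⨯₃ a) ⨯₃ A) ⨯₃ a₁` this holds because `a₁`
lies on `af`. Since `B` passes through `f`, the meet `(f ⨯₃ b) ⨯₃ B` is a multiple of `f`, so the
second line is a multiple of `((f ⨯₃ k) ⨯₃ C) ⨯₃ b₁`, which passes through `f` for the same reason.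
Three concurrent lines have vanishing bracket when the common point is nonzero, and for `f = 0`
the third line `f ⨯₃ c` vanishes.
-/

open Matrix

variable {R : Type*} [CommRing R]

theorem dotProduct_cross_eq_zero_of_dotProduct_eq_zero [IsDomain R] {u v w f : Fin 3 → R}
    (hf : f ≠ 0) (hu : u ⬝ᵥ f = 0) (hv : v ⬝ᵥ f = 0) (hw : w ⬝ᵥ f = 0) :
    u ⬝ᵥ v ⨯₃ w = 0 := by
  rw [triple_product_eq_det]
  refine exists_mulVec_eq_zero_iff.mp ⟨f, hf, ?_⟩
  ext i
  fin_cases i <;> simp [mulVec, hu, hv, hw]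

theorem cross_cross_eq_neg_smul_of_dotProduct_eq_zero {f p L : Fin 3 → R} (hL : L ⬝ᵥ f = 0) :
    f ⨯₃ p ⨯₃ L = -((p ⬝ᵥ L) • f) := by
  rw [cross_cross_eq_smul_sub_smul, dotProduct_comm, hL, zero_smul, zero_sub]

-- The line joining `q` to the meet of `fp` with `L` is `fp` itself when `q` lies on `fp`.
theorem cross_cross_cross_dotProduct_eq_zero {f p q : Fin 3 → R} (L : Fin 3 → R)
    (hq : q ⬝ᵥ p ⨯₃ f = 0) : f ⨯₃ p ⨯₃ L ⨯₃ q ⬝ᵥ f = 0 := by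
  have hpq : p ⨯₃ q ⬝ᵥ f = 0 := by
    rw [dotProduct_comm, triple_product_permutation, triple_product_permutation,
      ← cross_anticomm, dotProduct_neg, hq, neg_zero]
  have hfq : f ⨯₃ q ⬝ᵥ f = 0 := by rw [dotProduct_comm, dot_self_cross]
  simp only [cross_cross_eq_smul_sub_smul, map_sub, map_smul, LinearMap.sub_apply,
    LinearMap.smul_apply, sub_dotProduct, smul_dotProduct, hpq, hfq, smul_zero, sub_zero]

/-- If b₁ lies on the line kf, f lies on the line B, and a₁ lies on the line af,
then f lies on Grassmann's cubic. -/
theorem grassmann_cubic_through_f (a a₁ b b₁ c f k A B C : Fin 3 → ℝ)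
    (hb₁ : b₁ ⬝ᵥ (k ⨯₃ f) = 0) (hfB : B ⬝ᵥ f = 0)
    (ha₁ : a₁ ⬝ᵥ (a ⨯₃ f) = 0) :
    (((f ⨯₃ a) ⨯₃ A) ⨯₃ a₁) ⬝ᵥ
      ((((((f ⨯₃ b) ⨯₃ B) ⨯₃ k) ⨯₃ C) ⨯₃ b₁) ⨯₃ (f ⨯₃ c)) = 0 := by
  rcases eq_or_ne f 0 with rfl | hf
  · simp
  refine dotProduct_cross_eq_zero_of_dotProduct_eq_zero hf
    (cross_cross_cross_dotProduct_eq_zero A ha₁) ?_ (by rw [dotProduct_comm, dot_self_cross])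
  rw [cross_cross_eq_neg_smul_of_dotProduct_eq_zero hfB]
  simp [cross_cross_cross_dotProduct_eq_zero C hb₁]
end

section
/- Third intersection of a line with Grassmann's cubic: let p = (abAa₁) ×₃ (abBkCb₁), where abAa₁ = (((a ×₃ b) ×₃ A) ×₃ a₁) and abBkCb₁ = (((((a ×₃ b) ×₃ B) ×₃ k) ×₃ C) ×₃ b₁), and set y = (p ×₃ c) ×₃ (a ×₃ b). If y is nonzero and not proportional to a or b, then y lies on Grassmann's cubic G(x) = 0 and on the line through a and b; thus y is the third point of intersection of the line ab with the cubic. -/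
/-!
Every point `y = μ a + ν b` of the line `ab` satisfies `y ⨯₃ a = -ν (a ⨯₃ b)` and
`y ⨯₃ b = μ (a ⨯₃ b)`, so after moving one cross product across the dot product the cubic restricts
to the line as `G(y) = -μν · p ⬝ (y ⨯₃ c)` with `p = (abAa₁) ⨯₃ (abBkCb₁)`.
The vector `y = (p ⨯₃ c) ⨯₃ (a ⨯₃ b)` lies on the line `ab` and is orthogonal to `p ⨯₃ c`, which is
exactly the vanishing of `p ⬝ (y ⨯₃ c)`.
-/

open Matrix

namespace Matrix

variable {R : Type*} [CommRing R]

def grassmannCubic (a a₁ b b₁ c k A B C x : Fin 3 → R) : R :=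
  (((x ⨯₃ a) ⨯₃ A) ⨯₃ a₁) ⬝ᵥ ((((((x ⨯₃ b) ⨯₃ B) ⨯₃ k) ⨯₃ C) ⨯₃ b₁) ⨯₃ (x ⨯₃ c))

lemma smul_add_smul_cross_left (μ ν : R) (a b : Fin 3 → R) :
    (μ • a + ν • b) ⨯₃ a = -ν • (a ⨯₃ b) := by
  simp only [map_add, map_smul, LinearMap.add_apply, LinearMap.smul_apply, cross_self, smul_zero,
    zero_add]
  rw [← cross_anticomm a b, smul_neg, neg_smul]

lemma smul_add_smul_cross_right (μ ν : R) (a b : Fin 3 → R) :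
    (μ • a + ν • b) ⨯₃ b = μ • (a ⨯₃ b) := by
  simp [cross_self]

lemma dotProduct_cross_cross_left (u v w : Fin 3 → R) : u ⬝ᵥ (v ⨯₃ w) = (u ⨯₃ v) ⬝ᵥ w := by
  rw [triple_product_permutation, triple_product_permutation, dotProduct_comm]

lemma grassmannCubic_smul_add_smul (a a₁ b b₁ c k A B C : Fin 3 → R) (μ ν : R) :
    grassmannCubic a a₁ b b₁ c k A B C (μ • a + ν • b) =
      -(μ * ν) * (((((a ⨯₃ b) ⨯₃ A) ⨯₃ a₁) ⨯₃ (((((a ⨯₃ b) ⨯₃ B) ⨯₃ k) ⨯₃ C) ⨯₃ b₁)) ⬝ᵥ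
        ((μ • a + ν • b) ⨯₃ c)) := by
  rw [grassmannCubic, smul_add_smul_cross_left, smul_add_smul_cross_right]
  simp only [map_smul, LinearMap.smul_apply, smul_dotProduct, dotProduct_smul, smul_eq_mul,
    dotProduct_cross_cross_left]
  ring

lemma dotProduct_cross_cross_cross_eq_zero (p c w : Fin 3 → R) :
    p ⬝ᵥ (((p ⨯₃ c) ⨯₃ w) ⨯₃ c) = 0 := by
  rw [triple_product_permutation, ← cross_anticomm p c, dotProduct_neg, dotProduct_comm,
    dot_self_cross, neg_zero]

end Matrix

theorem grassmann_third_intersection_general (a a₁ b b₁ c k A B C : Fin 3 → ℝ)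
    (p y : Fin 3 → ℝ)
    (hp : p = ((((a ⨯₃ b) ⨯₃ A) ⨯₃ a₁)) ⨯₃ (((((a ⨯₃ b) ⨯₃ B) ⨯₃ k) ⨯₃ C) ⨯₃ b₁))
    (hy : y = (p ⨯₃ c) ⨯₃ (a ⨯₃ b)) :
    (((y ⨯₃ a) ⨯₃ A) ⨯₃ a₁) ⬝ᵥ
        ((((((y ⨯₃ b) ⨯₃ B) ⨯₃ k) ⨯₃ C) ⨯₃ b₁) ⨯₃ (y ⨯₃ c)) = 0 ∧
      (a ⨯₃ b) ⬝ᵥ y = 0 := by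
  have hy_line : y = ((p ⨯₃ c) ⬝ᵥ b) • a + (-((p ⨯₃ c) ⬝ᵥ a)) • b := by
    rw [hy, cross_cross_eq_smul_sub_smul', dotProduct_comm a, neg_smul, sub_eq_add_neg]
  refine ⟨?_, hy ▸ dot_cross_self _ _⟩
  change grassmannCubic a a₁ b b₁ c k A B C y = 0
  rw [hy_line, grassmannCubic_smul_add_smul, ← hp, ← hy_line, hy,
    dotProduct_cross_cross_cross_eq_zero, mul_zero]

/-- The third point of intersection of the line ab with Grassmann's cubic:
the point y = (pc)(ab), with p = (abAa₁)(abBkCb₁), lies on the cubic and on the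
line through a and b, provided y is nonzero and not proportional to a or b. -/
theorem grassmann_third_intersection (a a₁ b b₁ c k A B C : Fin 3 → ℝ)
    (p y : Fin 3 → ℝ)
    (hp : p = ((((a ⨯₃ b) ⨯₃ A) ⨯₃ a₁)) ⨯₃ (((((a ⨯₃ b) ⨯₃ B) ⨯₃ k) ⨯₃ C) ⨯₃ b₁))
    (hy : y = (p ⨯₃ c) ⨯₃ (a ⨯₃ b))
    (hy0 : y ≠ 0) (hya : ∀ t : ℝ, y ≠ t • a) (hyb : ∀ t : ℝ, y ≠ t • b) :
    (((y ⨯₃ a) ⨯₃ A) ⨯₃ a₁) ⬝ᵥ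
        ((((((y ⨯₃ b) ⨯₃ B) ⨯₃ k) ⨯₃ C) ⨯₃ b₁) ⨯₃ (y ⨯₃ c)) = 0 ∧
      (a ⨯₃ b) ⬝ᵥ y = 0 :=
  grassmann_third_intersection_general a a₁ b b₁ c k A B C p y hp hy
end

section
/- Multilinearity specialization on a secant line: for any scalars μ, ν and points a, b on Grassmann's cubic G, one has G(μ•a + ν•b) = μν · ((baAa₁) ⬝ ((abBkCb₁) ×₃ ((μ•a + ν•b) ×₃ c))), where baAa₁ = (((b ×₃ a) ×₃ A) ×₃ a₁) and abBkCb₁ = (((((a ×₃ b) ×₃ B) ×₃ k) ×₃ C) ×₃ b₁). -/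
open Matrix

section

variable {R : Type*} [CommRing R]

theorem smul_cross (r : R) (u v : Fin 3 → R) : (r • u) ⨯₃ v = r • (u ⨯₃ v) :=
  LinearMap.map_smul₂ _ r u v

theorem smul_add_smul_cross_self_left (μ ν : R) (a b : Fin 3 → R) :
    (μ • a + ν • b) ⨯₃ a = ν • (b ⨯₃ a) := by
  simp only [map_add, LinearMap.add_apply, smul_cross, cross_self, smul_zero, zero_add]

theorem smul_add_smul_cross_self_right (μ ν : R) (a b : Fin 3 → R) :
    (μ • a + ν • b) ⨯₃ b = μ • (a ⨯₃ b) := by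
  simp only [map_add, LinearMap.add_apply, smul_cross, cross_self, smul_zero, add_zero]

end

/-- Multilinearity specialization of Grassmann's cubic form on the secant line ab. -/
theorem grassmann_cubic_on_secant (a a₁ b b₁ c k A B C : Fin 3 → ℝ) (μ ν : ℝ) :
    ((((μ • a + ν • b) ⨯₃ a) ⨯₃ A) ⨯₃ a₁) ⬝ᵥ
        ((((((μ • a + ν • b) ⨯₃ b) ⨯₃ B) ⨯₃ k) ⨯₃ C) ⨯₃ b₁) ⨯₃
          ((μ • a + ν • b) ⨯₃ c)
      = μ * ν *
        ((((b ⨯₃ a) ⨯₃ A) ⨯₃ a₁) ⬝ᵥ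
          (((((a ⨯₃ b) ⨯₃ B) ⨯₃ k) ⨯₃ C) ⨯₃ b₁) ⨯₃ ((μ • a + ν • b) ⨯₃ c)) := by
  rw [smul_add_smul_cross_self_left, smul_add_smul_cross_self_right]
  simp only [smul_cross, smul_dotProduct, dotProduct_smul, smul_eq_mul]
  ring
end

section
/- Tangent line to Grassmann's cubic at a: let p = (abBkCb₁) ×₃ (a ×₃ c) with abBkCb₁ = (((((a ×₃ b) ×₃ B) ×₃ k) ×₃ C) ×₃ b₁), and define the line T = ((p ×₃ a₁) ×₃ A) ×₃ a. Then for every vector v, the first-order term of G(a + εv) in ε is (((v ×₃ a) ×₃ A) ×₃ a₁) ⬝ p (up to sign), and this vanishes whenever v lies on the line T. Hence T is tangent to the cubic G = 0 at a (assuming a is a smooth point and the construction is nondegenerate). -/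
open Matrix

/-!
`G(a + εv)` is a cubic polynomial in `ε` with no constant term, because the first factor is
linear in `x` and vanishes at `x = a` (`a ⨯₃ a = 0`); its `ε`-coefficient is
`(vaAa₁) ⬝ p`. Moving the three cross products `⨯₃ a`, `⨯₃ A`, `⨯₃ a₁` across the dot
product one at a time (each move costs a sign) turns `T ⬝ v` into `-(vaAa₁) ⬝ p`.
-/

section CrossProduct

variable {R : Type*} [CommRing R]

theorem cross_dotProduct_eq_neg_dotProduct_cross (x y z : Fin 3 → R) :
    x ⨯₃ y ⬝ᵥ z = -(x ⬝ᵥ z ⨯₃ y) := by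
  rw [dotProduct_comm, triple_product_permutation, ← cross_anticomm, dotProduct_neg]

theorem dotProduct_cross_add_smul_of_map_eq_zero
    (f g h : (Fin 3 → R) →ₗ[R] Fin 3 → R) {a : Fin 3 → R} (ha : f a = 0)
    (v : Fin 3 → R) (ε : R) :
    f (a + ε • v) ⬝ᵥ g (a + ε • v) ⨯₃ h (a + ε • v)
      = ε * (f v ⬝ᵥ g a ⨯₃ h a)
        + ε ^ 2 * (f v ⬝ᵥ g a ⨯₃ h v + f v ⬝ᵥ g v ⨯₃ h a)
        + ε ^ 3 * (f v ⬝ᵥ g v ⨯₃ h v) := by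
  simp only [map_add, map_smul, ha, zero_add, LinearMap.add_apply, LinearMap.smul_apply,
    dotProduct_add, smul_dotProduct, dotProduct_smul, smul_eq_mul]
  ring

end CrossProduct

theorem grassmann_tangent_line_general (a a₁ b b₁ c k A B C : Fin 3 → ℝ)
    (p T : Fin 3 → ℝ)
    (hp : p = (((((a ⨯₃ b) ⨯₃ B) ⨯₃ k) ⨯₃ C) ⨯₃ b₁) ⨯₃ (a ⨯₃ c))
    (hT : T = ((p ⨯₃ a₁) ⨯₃ A) ⨯₃ a) :
    (∀ v : Fin 3 → ℝ, ∀ ε : ℝ,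
        ((((a + ε • v) ⨯₃ a) ⨯₃ A) ⨯₃ a₁) ⬝ᵥ
            ((((((a + ε • v) ⨯₃ b) ⨯₃ B) ⨯₃ k) ⨯₃ C) ⨯₃ b₁) ⨯₃ ((a + ε • v) ⨯₃ c)
          = ε * ((((v ⨯₃ a) ⨯₃ A) ⨯₃ a₁) ⬝ᵥ p)
            + ε ^ 2 *
              ((((v ⨯₃ a) ⨯₃ A) ⨯₃ a₁) ⬝ᵥ
                  (((((a ⨯₃ b) ⨯₃ B) ⨯₃ k) ⨯₃ C) ⨯₃ b₁) ⨯₃ (v ⨯₃ c)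
                + (((v ⨯₃ a) ⨯₃ A) ⨯₃ a₁) ⬝ᵥ
                  (((((v ⨯₃ b) ⨯₃ B) ⨯₃ k) ⨯₃ C) ⨯₃ b₁) ⨯₃ (a ⨯₃ c))
            + ε ^ 3 *
              ((((v ⨯₃ a) ⨯₃ A) ⨯₃ a₁) ⬝ᵥ
                (((((v ⨯₃ b) ⨯₃ B) ⨯₃ k) ⨯₃ C) ⨯₃ b₁) ⨯₃ (v ⨯₃ c))) ∧
      ∀ v : Fin 3 → ℝ, T ⬝ᵥ v = 0 →
        (((v ⨯₃ a) ⨯₃ A) ⨯₃ a₁) ⬝ᵥ p = 0 := by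
  subst hp hT
  constructor
  · intro v ε
    have hfa : (crossProduct.flip a₁ ∘ₗ crossProduct.flip A ∘ₗ crossProduct.flip a) a = 0 := by
      simp [cross_self]
    simpa using dotProduct_cross_add_smul_of_map_eq_zero
      (crossProduct.flip a₁ ∘ₗ crossProduct.flip A ∘ₗ crossProduct.flip a)
      (crossProduct.flip b₁ ∘ₗ crossProduct.flip C ∘ₗ crossProduct.flip k ∘ₗ
        crossProduct.flip B ∘ₗ crossProduct.flip b)
      (crossProduct.flip c) hfa v ε
  · intro v hv
    rwa [cross_dotProduct_eq_neg_dotProduct_cross, cross_dotProduct_eq_neg_dotProduct_cross,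
      cross_dotProduct_eq_neg_dotProduct_cross, neg_neg, neg_eq_zero, dotProduct_comm] at hv

/-- The tangent line to Grassmann's cubic at a: with p = (abBkCb₁)(ac) and
T = pa₁Aa, the expansion of G(a + εv) has first-order coefficient
(vaAa₁) ⬝ p, and this coefficient vanishes for every v on the line T. -/
theorem grassmann_tangent_line (a a₁ b b₁ c k A B C : Fin 3 → ℝ)
    (p T : Fin 3 → ℝ)
    (hp : p = (((((a ⨯₃ b) ⨯₃ B) ⨯₃ k) ⨯₃ C) ⨯₃ b₁) ⨯₃ (a ⨯₃ c))
    (hT : T = ((p ⨯₃ a₁) ⨯₃ A) ⨯₃ a) (hT0 : T ≠ 0) :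
    (∀ v : Fin 3 → ℝ, ∀ ε : ℝ,
        ((((a + ε • v) ⨯₃ a) ⨯₃ A) ⨯₃ a₁) ⬝ᵥ
            ((((((a + ε • v) ⨯₃ b) ⨯₃ B) ⨯₃ k) ⨯₃ C) ⨯₃ b₁) ⨯₃ ((a + ε • v) ⨯₃ c)
          = ε * ((((v ⨯₃ a) ⨯₃ A) ⨯₃ a₁) ⬝ᵥ p)
            + ε ^ 2 *
              ((((v ⨯₃ a) ⨯₃ A) ⨯₃ a₁) ⬝ᵥ
                  (((((a ⨯₃ b) ⨯₃ B) ⨯₃ k) ⨯₃ C) ⨯₃ b₁) ⨯₃ (v ⨯₃ c)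
                + (((v ⨯₃ a) ⨯₃ A) ⨯₃ a₁) ⬝ᵥ
                  (((((v ⨯₃ b) ⨯₃ B) ⨯₃ k) ⨯₃ C) ⨯₃ b₁) ⨯₃ (a ⨯₃ c))
            + ε ^ 3 *
              ((((v ⨯₃ a) ⨯₃ A) ⨯₃ a₁) ⬝ᵥ
                (((((v ⨯₃ b) ⨯₃ B) ⨯₃ k) ⨯₃ C) ⨯₃ b₁) ⨯₃ (v ⨯₃ c))) ∧
      ∀ v : Fin 3 → ℝ, T ⬝ᵥ v = 0 →
        (((v ⨯₃ a) ⨯₃ A) ⨯₃ a₁) ⬝ᵥ p = 0 :=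
  grassmann_tangent_line_general a a₁ b b₁ c k A B C p T hp hT
end
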